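/- Let Ξ ⊆ ℝ^k be a Borel set, P and Q Borel probability measures on Ξ with finite first moments, M a positive integer, c ≥ 0, and F : Ξ^M → ℝ^N a map satisfying ‖F(x¹,…,x^M) − F(y¹,…,y^M)‖ ≤ (c/M) Σ_{i=1}^M ‖x^i − y^i‖ for all (x¹,…,x^M), (y¹,…,y^M) ∈ Ξ^M (so F is continuous, hence Borel measurable). Then the pushforwards of the product measures under F satisfy dl_K( P^{⊗M} ∘ F⁻¹ , Q^{⊗M} ∘ F⁻¹ ) ≤ c · dl_K(P, Q). -/

import Mathlib

/-!
For a 1-Lipschitz test function `g`, the map `g ∘ F` is `c / M`-Lipschitz on `Ξ^M` for the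
`ℓ¹` distance `∑ i, ‖x i - y i‖`, so by McShane's extension it agrees on `Ξ^M`, a set of full
measure for both product measures, with a function `H` that is `c / M`-Lipschitz for that
distance everywhere. Replacing the factors `P` of `P^{⊗M}` by `Q` one at a time changes `∫ H`
by at most `(c / M) · dl_K(P, Q)` per step: by Fubini, each step compares the integrals against
`P` and `Q` of a `c / M`-Lipschitz function of the swapped coordinate. After `M` steps this gives
`c · dl_K(P, Q)`.
-/

open MeasureTheory

noncomputable def Kdist {E : Type*} [MeasurableSpace E] [NormedAddCommGroup E]
    (μ ν : Measure E) : ℝ :=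
  sSup {x : ℝ | ∃ g : E → ℝ, (∀ a b : E, |g a - g b| ≤ ‖a - b‖) ∧
    x = |(∫ y, g y ∂μ) - ∫ y, g y ∂ν|}

open Set Filter
open scoped NNReal

section LipschitzL1

variable {ι E β : Type*} [Fintype ι] [PseudoMetricSpace E] [PseudoMetricSpace β]

def LipschitzOnWithL1 (K : ℝ≥0) (f : (ι → E) → β) (s : Set (ι → E)) : Prop :=
  ∀ x ∈ s, ∀ y ∈ s, dist (f x) (f y) ≤ K * ∑ i, dist (x i) (y i)

def LipschitzWithL1 (K : ℝ≥0) (f : (ι → E) → β) : Prop :=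
  ∀ x y, dist (f x) (f y) ≤ K * ∑ i, dist (x i) (y i)

theorem LipschitzOnWithL1.lipschitzOnWith {K : ℝ≥0} {f : (ι → E) → β} {s : Set (ι → E)}
    (hf : LipschitzOnWithL1 K f s) : LipschitzOnWith (Fintype.card ι * K) f s := by
  refine LipschitzOnWith.of_dist_le_mul fun x hx y hy => (hf x hx y hy).trans ?_
  calc (K : ℝ) * ∑ i, dist (x i) (y i) ≤ K * ∑ _i : ι, dist x y := by
        gcongr with i; exact dist_le_pi_dist x y i
    _ = ↑(Fintype.card ι * K) * dist x y := by
      simp only [Finset.sum_const, Finset.card_univ, nsmul_eq_mul, NNReal.coe_mul,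
        NNReal.coe_natCast]
      ring

theorem LipschitzWithL1.lipschitzWith {K : ℝ≥0} {f : (ι → E) → β} (hf : LipschitzWithL1 K f) :
    LipschitzWith (Fintype.card ι * K) f :=
  lipschitzOnWith_univ.mp (LipschitzOnWithL1.lipschitzOnWith fun x _ y _ => hf x y)

theorem LipschitzWith.comp_lipschitzOnWithL1 {γ : Type*} [PseudoMetricSpace γ] {Kg K : ℝ≥0}
    {g : β → γ} {f : (ι → E) → β} {s : Set (ι → E)} (hg : LipschitzWith Kg g)
    (hf : LipschitzOnWithL1 K f s) : LipschitzOnWithL1 (Kg * K) (g ∘ f) s := fun x hx y hy =>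
  calc dist (g (f x)) (g (f y)) ≤ Kg * dist (f x) (f y) := hg.dist_le_mul _ _
    _ ≤ Kg * (K * ∑ i, dist (x i) (y i)) := by gcongr; exact hf x hx y hy
    _ = ↑(Kg * K) * ∑ i, dist (x i) (y i) := by push_cast; ring

theorem PiLp.dist_eq_sum_dist_of_L1 {α : ι → Type*} [∀ i, PseudoMetricSpace (α i)]
    (x y : PiLp 1 α) : dist x y = ∑ i, dist (x i) (y i) := by
  simpa using PiLp.dist_eq_sum (p := 1) (by norm_num) x y

/-- McShane extension in `PiLp 1`, whose distance is the `ℓ¹` one. -/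
theorem LipschitzOnWithL1.exists_lipschitzWithL1_eqOn {K : ℝ≥0} {f : (ι → E) → ℝ}
    {s : Set (ι → E)} (hf : LipschitzOnWithL1 K f s) :
    ∃ H : (ι → E) → ℝ, LipschitzWithL1 K H ∧ EqOn f H s := by
  have hf₁ : LipschitzOnWith K (fun x : PiLp 1 (fun _ : ι => E) => f x.ofLp)
      (WithLp.ofLp ⁻¹' s) :=
    LipschitzOnWith.of_dist_le_mul fun x hx y hy => by
      simpa only [PiLp.dist_eq_sum_dist_of_L1] using hf _ hx _ hy
  obtain ⟨H, hH, hfH⟩ := hf₁.extend_real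
  refine ⟨fun x => H (WithLp.toLp 1 x), fun x y => ?_, fun x hx => hfH (x := WithLp.toLp 1 x) hx⟩
  simpa only [PiLp.dist_eq_sum_dist_of_L1] using hH.dist_le_mul (WithLp.toLp 1 x) (WithLp.toLp 1 y)

theorem LipschitzWithL1.cons {m : ℕ} {K : ℝ≥0} {f : (Fin (m + 1) → E) → β}
    (hf : LipschitzWithL1 K f) (a : E) : LipschitzWithL1 K fun x : Fin m → E => f (Fin.cons a x) :=
  fun x y => by simpa [Fin.sum_univ_succ] using hf (Fin.cons a x) (Fin.cons a y)

theorem LipschitzWithL1.lipschitzWith_cons {m : ℕ} {K : ℝ≥0} {f : (Fin (m + 1) → E) → β}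
    (hf : LipschitzWithL1 K f) (x : Fin m → E) : LipschitzWith K fun a : E => f (Fin.cons a x) :=
  LipschitzWith.of_dist_le_mul fun a b => by
    simpa [Fin.sum_univ_succ] using hf (Fin.cons a x) (Fin.cons b x)

end LipschitzL1

section Integrability

variable {E : Type*} [NormedAddCommGroup E] [MeasurableSpace E]

theorem LipschitzWith.integrable {F : Type*} [NormedAddCommGroup F]
    [OpensMeasurableSpace E] [SecondCountableTopologyEither E F]
    {μ : Measure E} [IsFiniteMeasure μ] {K : ℝ≥0} {f : E → F} (hf : LipschitzWith K f)
    (hμ : Integrable (fun x => ‖x‖) μ) : Integrable f μ := by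
  refine ((integrable_const ‖f 0‖).add (hμ.const_mul K)).mono'
    hf.continuous.aestronglyMeasurable (Eventually.of_forall fun x => ?_)
  calc ‖f x‖ ≤ ‖f 0‖ + ‖f x - f 0‖ := norm_le_norm_add_norm_sub' _ _
    _ ≤ ‖f 0‖ + K * ‖x‖ := by
      gcongr; simpa [dist_eq_norm] using hf.dist_le_mul x 0

theorem integrable_norm_pi {ι : Type*} [Fintype ι] {E : ι → Type*}
    [∀ i, NormedAddCommGroup (E i)] [∀ i, MeasurableSpace (E i)] [∀ i, OpensMeasurableSpace (E i)]
    [∀ i, SecondCountableTopology (E i)]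
    {μ : ∀ i, Measure (E i)} [∀ i, IsProbabilityMeasure (μ i)]
    (hμ : ∀ i, Integrable (fun x => ‖x‖) (μ i)) :
    Integrable (fun x : ∀ i, E i => ‖x‖) (Measure.pi μ) := by
  refine (integrable_finsetSum Finset.univ fun i _ => integrable_comp_eval (hμ i)).mono' ?_
    (Eventually.of_forall fun x => ?_)
  · exact continuous_norm.aestronglyMeasurable
  · rw [norm_norm]
    exact pi_norm_le_iff_of_nonneg (by positivity) |>.mpr fun i =>
      Finset.single_le_sum (f := fun i => ‖x i‖) (fun _ _ => norm_nonneg _) (Finset.mem_univ i)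

theorem integral_pi_eq_integral_integral_cons {m : ℕ} {α : Fin (m + 1) → Type*}
    [∀ i, MeasurableSpace (α i)] (μ : ∀ i, Measure (α i)) [∀ i, SigmaFinite (μ i)]
    {G : Type*} [NormedAddCommGroup G] [NormedSpace ℝ G] {f : (∀ i, α i) → G}
    (hf : Integrable f (Measure.pi μ)) :
    ∫ x, f x ∂Measure.pi μ =
      ∫ a, ∫ x, f (Fin.cons a x) ∂Measure.pi (fun j => μ j.succ) ∂μ 0 := by
  have he := (measurePreserving_piFinSuccAbove μ 0).symm
  rw [← he.integral_comp', integral_prod]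
  · simp_rw [MeasurableEquiv.piFinSuccAbove_symm_apply, Fin.insertNthEquiv, Equiv.coe_fn_mk,
      Fin.insertNth_zero]
    rfl
  · exact (he.integrable_comp_emb (MeasurableEquiv.measurableEmbedding _)).mpr hf

end Integrability

section Kantorovich

variable {E : Type*} [NormedAddCommGroup E]

theorem lipschitzWith_one_iff_abs_sub_le {g : E → ℝ} :
    LipschitzWith 1 g ↔ ∀ a b, |g a - g b| ≤ ‖a - b‖ := by
  simp [lipschitzWith_iff_dist_le_mul, dist_eq_norm]

variable [MeasurableSpace E]

theorem Kdist_le {μ ν : Measure E} {r : ℝ}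
    (h : ∀ g : E → ℝ, LipschitzWith 1 g → |∫ x, g x ∂μ - ∫ x, g x ∂ν| ≤ r) : Kdist μ ν ≤ r :=
  csSup_le ⟨_, fun _ => 0, by simp, rfl⟩ fun _ ⟨g, hg, hx⟩ =>
    hx ▸ h g (lipschitzWith_one_iff_abs_sub_le.mpr hg)

variable [OpensMeasurableSpace E] {μ ν : Measure E} [IsProbabilityMeasure μ]
  [IsProbabilityMeasure ν] {K : ℝ≥0} {f : E → ℝ}

theorem LipschitzWith.abs_integral_sub_le_mul_integral_norm (hf : LipschitzWith K f)
    (hμ : Integrable (fun x => ‖x‖) μ) (hν : Integrable (fun x => ‖x‖) ν) :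
    |∫ x, f x ∂μ - ∫ x, f x ∂ν| ≤ K * (∫ x, ‖x‖ ∂μ + ∫ x, ‖x‖ ∂ν) := by
  have hcentered : ∀ ρ : Measure E, [IsProbabilityMeasure ρ] → Integrable (fun x => ‖x‖) ρ →
      ∫ x, f x ∂ρ = f 0 + ∫ x, (f x - f 0) ∂ρ ∧ |∫ x, (f x - f 0) ∂ρ| ≤ K * ∫ x, ‖x‖ ∂ρ := by
    intro ρ _ hρ
    constructor
    · rw [integral_sub (hf.integrable hρ) (integrable_const (f 0))]
      simp
    · have := norm_integral_le_of_norm_le (f := fun x => f x - f 0) (hρ.const_mul K)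
        (Eventually.of_forall fun x => by simpa [dist_eq_norm] using hf.dist_le_mul x 0)
      rwa [integral_const_mul, Real.norm_eq_abs] at this
  obtain ⟨hμf, hμb⟩ := hcentered μ hμ
  obtain ⟨hνf, hνb⟩ := hcentered ν hν
  rw [hμf, hνf, add_sub_add_left_eq_sub, mul_add]
  exact (abs_sub _ _).trans (add_le_add hμb hνb)

theorem LipschitzWith.abs_integral_sub_le_Kdist (hf : LipschitzWith 1 f)
    (hμ : Integrable (fun x => ‖x‖) μ) (hν : Integrable (fun x => ‖x‖) ν) :
    |∫ x, f x ∂μ - ∫ x, f x ∂ν| ≤ Kdist μ ν := by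
  refine le_csSup ⟨∫ x, ‖x‖ ∂μ + ∫ x, ‖x‖ ∂ν, ?_⟩ ⟨f, lipschitzWith_one_iff_abs_sub_le.mp hf, rfl⟩
  rintro _ ⟨g, hg, rfl⟩
  simpa using (lipschitzWith_one_iff_abs_sub_le.mpr hg).abs_integral_sub_le_mul_integral_norm hμ hν

theorem LipschitzWith.abs_integral_sub_le_mul_Kdist (hf : LipschitzWith K f)
    (hμ : Integrable (fun x => ‖x‖) μ) (hν : Integrable (fun x => ‖x‖) ν) :
    |∫ x, f x ∂μ - ∫ x, f x ∂ν| ≤ K * Kdist μ ν := by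
  rcases eq_or_ne K 0 with rfl | hK
  · simpa using hf.abs_integral_sub_le_mul_integral_norm hμ hν
  have hK' : (0 : ℝ) < K := by positivity
  have hg : LipschitzWith 1 fun x => f x / K := LipschitzWith.of_dist_le_mul fun x y => by
    rw [Real.dist_eq, ← _root_.sub_div, abs_div, abs_of_pos hK', div_le_iff₀ hK', NNReal.coe_one,
      one_mul, mul_comm, ← Real.dist_eq]
    exact hf.dist_le_mul x y
  have := hg.abs_integral_sub_le_Kdist hμ hν
  rwa [integral_div, integral_div, ← _root_.sub_div, abs_div, abs_of_pos hK',
    div_le_iff₀' hK'] at this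

end Kantorovich

section Product

variable {E : Type*} [NormedAddCommGroup E] [MeasurableSpace E] [OpensMeasurableSpace E]
  [SecondCountableTopology E] {K : ℝ≥0}

theorem LipschitzWithL1.integrable {ι : Type*} [Fintype ι] {ρ : Measure E}
    [IsProbabilityMeasure ρ] {H : (ι → E) → ℝ} (hH : LipschitzWithL1 K H)
    (hρ : Integrable (fun x => ‖x‖) ρ) : Integrable H (Measure.pi fun _ : ι => ρ) :=
  hH.lipschitzWith.integrable (integrable_norm_pi fun _ => hρ)

theorem LipschitzWithL1.lipschitzWith_integral_cons {m : ℕ} {ρ : Measure E}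
    [IsProbabilityMeasure ρ] {H : (Fin (m + 1) → E) → ℝ} (hH : LipschitzWithL1 K H)
    (hρ : Integrable (fun x => ‖x‖) ρ) :
    LipschitzWith K fun a => ∫ x, H (Fin.cons a x) ∂Measure.pi fun _ => ρ :=
  LipschitzWith.of_dist_le_mul fun a b => by
    rw [dist_eq_norm, ← integral_sub ((hH.cons a).integrable hρ) ((hH.cons b).integrable hρ)]
    simpa using norm_integral_le_of_norm_le_const (μ := Measure.pi fun _ : Fin m => ρ)
      (f := fun x => H (Fin.cons a x) - H (Fin.cons b x))
      (Eventually.of_forall fun x => (dist_eq_norm _ _).symm.trans_le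
        ((hH.lipschitzWith_cons x).dist_le_mul a b))

theorem LipschitzWithL1.abs_integral_pi_sub_le {P Q : Measure E} [IsProbabilityMeasure P]
    [IsProbabilityMeasure Q] (hP : Integrable (fun x => ‖x‖) P)
    (hQ : Integrable (fun x => ‖x‖) Q) {m : ℕ} {H : (Fin m → E) → ℝ}
    (hH : LipschitzWithL1 K H) :
    |∫ x, H x ∂Measure.pi (fun _ => P) - ∫ x, H x ∂Measure.pi (fun _ => Q)| ≤
      m * K * Kdist P Q := by
  induction m with
  | zero => simp [integral_unique]
  | succ m ih =>
    set HP := fun a => ∫ x, H (Fin.cons a x) ∂Measure.pi fun _ => P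
    set HQ := fun a => ∫ x, H (Fin.cons a x) ∂Measure.pi fun _ => Q
    have hHP : LipschitzWith K HP := hH.lipschitzWith_integral_cons hP
    have hHQ : LipschitzWith K HQ := hH.lipschitzWith_integral_cons hQ
    have hfiber : |∫ a, HP a ∂P - ∫ a, HQ a ∂P| ≤ m * K * Kdist P Q := by
      rw [← integral_sub (hHP.integrable hP) (hHQ.integrable hP)]
      simpa using norm_integral_le_of_norm_le_const (μ := P) (f := fun a => HP a - HQ a)
        (Eventually.of_forall fun a => (Real.norm_eq_abs _).trans_le (ih (hH.cons a)))
    rw [integral_pi_eq_integral_integral_cons _ (hH.integrable hP),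
      integral_pi_eq_integral_integral_cons _ (hH.integrable hQ)]
    calc |∫ a, HP a ∂P - ∫ a, HQ a ∂Q|
        ≤ |∫ a, HP a ∂P - ∫ a, HQ a ∂P| + |∫ a, HQ a ∂P - ∫ a, HQ a ∂Q| := abs_sub_le _ _ _
      _ ≤ m * K * Kdist P Q + K * Kdist P Q :=
        add_le_add hfiber (hHQ.abs_integral_sub_le_mul_Kdist hP hQ)
      _ = ↑(m + 1) * K * Kdist P Q := by push_cast; ring

end Product

theorem ae_mem_univ_pi {ι : Type*} [Fintype ι] {α : ι → Type*} [∀ i, MeasurableSpace (α i)]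
    {μ : ∀ i, Measure (α i)} [∀ i, SigmaFinite (μ i)] {t : ∀ i, Set (α i)}
    (ht : ∀ i, ∀ᵐ x ∂μ i, x ∈ t i) : ∀ᵐ x ∂Measure.pi μ, x ∈ univ.pi t :=
  (eventually_all.2 fun i => Measure.tendsto_eval_ae_ae.eventually (ht i)).mono
    fun _ hx => mem_univ_pi.mpr hx

theorem integral_map_eq_integral_of_eqOn {X Y : Type*} [TopologicalSpace X] [MeasurableSpace X]
    [OpensMeasurableSpace X] [TopologicalSpace Y] [MeasurableSpace Y] [BorelSpace Y]
    [SecondCountableTopology Y] {μ : Measure X} {s : Set X} (hs : MeasurableSet s)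
    (hμs : ∀ᵐ x ∂μ, x ∈ s) {F : X → Y} (hF : ContinuousOn F s) {g : Y → ℝ} (hg : Continuous g)
    {H : X → ℝ} (hgFH : EqOn (g ∘ F) H s) : ∫ y, g y ∂μ.map F = ∫ x, H x ∂μ := by
  have hFμ : AEMeasurable F μ := by
    simpa [Measure.restrict_eq_self_of_ae_mem hμs] using hF.aemeasurable (μ := μ) hs
  rw [integral_map hFμ hg.aestronglyMeasurable]
  exact integral_congr_ae (hμs.mono fun x hx => hgFH hx)

/-- if `F : Ξ^M → ℝ^N` satisfies
`‖F(x) − F(y)‖ ≤ (c/M) Σᵢ ‖xⁱ − yⁱ‖` on `Ξ^M`, then the pushforwards of the product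
measures satisfy `dl_K(P^{⊗M} ∘ F⁻¹, Q^{⊗M} ∘ F⁻¹) ≤ c · dl_K(P, Q)`. -/
theorem kantorovich_pushforward_bound (k N : ℕ)
    (Ξ : Set (EuclideanSpace ℝ (Fin k))) (hΞ : MeasurableSet Ξ)
    (P Q : Measure (EuclideanSpace ℝ (Fin k)))
    [IsProbabilityMeasure P] [IsProbabilityMeasure Q]
    (hPΞ : P Ξᶜ = 0) (hQΞ : Q Ξᶜ = 0)
    (hmomP : Integrable (fun ξ => ‖ξ‖) P) (hmomQ : Integrable (fun ξ => ‖ξ‖) Q)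
    (M : ℕ) (hM : 0 < M) (c : ℝ) (hc : 0 ≤ c)
    (F : (Fin M → EuclideanSpace ℝ (Fin k)) → EuclideanSpace ℝ (Fin N))
    (hF : ∀ x y : Fin M → EuclideanSpace ℝ (Fin k),
      (∀ i, x i ∈ Ξ) → (∀ i, y i ∈ Ξ) →
      ‖F x - F y‖ ≤ (c / M) * ∑ i : Fin M, ‖x i - y i‖) :
    Kdist (Measure.map F (Measure.pi fun _ : Fin M => P))
        (Measure.map F (Measure.pi fun _ : Fin M => Q)) ≤ c * Kdist P Q := by
  set K : ℝ≥0 := ⟨c / M, by positivity⟩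
  set s := univ.pi fun _ : Fin M => Ξ
  have hs : MeasurableSet s := .univ_pi fun _ => hΞ
  have hFs : LipschitzOnWithL1 K F s := fun x hx y hy => by
    simp only [dist_eq_norm]
    exact hF x y (mem_univ_pi.mp hx) (mem_univ_pi.mp hy)
  have hPs : ∀ᵐ x ∂Measure.pi fun _ => P, x ∈ s := ae_mem_univ_pi fun _ => mem_ae_iff.mpr hPΞ
  have hQs : ∀ᵐ x ∂Measure.pi fun _ => Q, x ∈ s := ae_mem_univ_pi fun _ => mem_ae_iff.mpr hQΞ
  refine Kdist_le fun g hg => ?_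
  obtain ⟨H, hH, hgFH⟩ := (hg.comp_lipschitzOnWithL1 hFs).exists_lipschitzWithL1_eqOn
  have hFc := hFs.lipschitzOnWith.continuousOn
  rw [integral_map_eq_integral_of_eqOn hs hPs hFc hg.continuous hgFH,
    integral_map_eq_integral_of_eqOn hs hQs hFc hg.continuous hgFH]
  calc _ ≤ M * ↑(1 * K) * Kdist P Q := hH.abs_integral_pi_sub_le hmomP hmomQ
    _ = c * Kdist P Q := by
      rw [one_mul, show (K : ℝ) = c / M from rfl, mul_div_cancel₀ c (by positivity)]
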